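/- Let ν ≥ 0 and let α be a real number with |α| ≤ 1. For t ≥ 0 define g_ν(t,·) : [0,∞) → ℝ by g_0(t,ξ) = φ_{0,0}(ξ) + ∑_{n=1}^∞ n C_n^0(α) e^{−n² t} φ_{0,n}(ξ) when ν = 0, and g_ν(t,ξ) = 2^ν Γ(ν) ∑_{n=0}^∞ (ν+n) C_n^ν(α) e^{−n(n+2ν)t} φ_{ν,n}(ξ) when ν > 0. Then for every t ≥ 0 the function ξ ↦ g_ν(t,ξ) has (one-sided) derivative at ξ = 0 equal to α e^{−(2ν+1)t}. -/

import Mathlib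

/-- For real `ν ≥ 0` and integer `n ≥ 0`, the function
`φ_{ν,n}(ξ) = ∑_{m=0}^∞ ξ^(n+2m) / (2^(ν+n+2m) Γ(m+1) Γ(ν+n+m+1))`. -/
noncomputable def phiBessel (ν : ℝ) (n : ℕ) (ξ : ℝ) : ℝ :=
  ∑' m : ℕ, ξ ^ (n + 2 * m) /
    ((2 : ℝ) ^ (ν + n + 2 * (m : ℝ)) * Real.Gamma ((m : ℝ) + 1) * Real.Gamma (ν + n + m + 1))

/-- For real `ν > 0` and integer `n ≥ 0`, the Gegenbauer polynomial
`C_n^ν(x) = (1/Γ(ν)) ∑_{m=0}^{⌊n/2⌋} (−1)^m Γ(ν+n−m) (2x)^(n−2m) / (m! (n−2m)!)`. -/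
noncomputable def gegenbauerC (ν : ℝ) (n : ℕ) (x : ℝ) : ℝ :=
  (1 / Real.Gamma ν) * ∑ m ∈ Finset.range (n / 2 + 1),
    (-1 : ℝ) ^ m * Real.Gamma (ν + n - m) * (2 * x) ^ (n - 2 * m) /
      ((m.factorial : ℝ) * ((n - 2 * m).factorial : ℝ))

/-- The degenerate Gegenbauer polynomial: `C_0^0(x) = 1` and, for `n ≥ 1`,
`C_n^0(x) = ∑_{m=0}^{⌊n/2⌋} (−1)^m Γ(n−m) (2x)^(n−2m) / (Γ(m+1) Γ(n−2m+1))`. -/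
noncomputable def gegenbauerC0 (n : ℕ) (x : ℝ) : ℝ :=
  if n = 0 then 1 else
    ∑ m ∈ Finset.range (n / 2 + 1),
      (-1 : ℝ) ^ m * Real.Gamma ((n : ℝ) - m) * (2 * x) ^ (n - 2 * m) /
        (Real.Gamma ((m : ℝ) + 1) * Real.Gamma ((n : ℝ) - 2 * m + 1))

/-- The function `g_ν(t,ξ)`: for `ν = 0`,
`g_0(t,ξ) = φ_{0,0}(ξ) + ∑_{n=1}^∞ n C_n^0(α) e^(−n²t) φ_{0,n}(ξ)`, and for `ν > 0`,
`g_ν(t,ξ) = 2^ν Γ(ν) ∑_{n=0}^∞ (ν+n) C_n^ν(α) e^(−n(n+2ν)t) φ_{ν,n}(ξ)`. -/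
noncomputable def gFun (ν α t ξ : ℝ) : ℝ :=
  if ν = 0 then
    phiBessel 0 0 ξ +
      ∑' n : ℕ, ((n + 1 : ℕ) : ℝ) * gegenbauerC0 (n + 1) α *
        Real.exp (-((n + 1 : ℕ) : ℝ) ^ 2 * t) * phiBessel 0 (n + 1) ξ
  else
    (2 : ℝ) ^ ν * Real.Gamma ν *
      ∑' n : ℕ, (ν + n) * gegenbauerC ν n α * Real.exp (-((n : ℝ) * ((n : ℝ) + 2 * ν)) * t) *
        phiBessel ν n ξ

open Real Set Filter Topology

/-! Every term of `φ_{ν,n}` has degree `n + 2m`, so on `[0, 1]` the function differs from its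
first-order Taylor polynomial at `0` by at most `ξ² φ_{ν,n}(1)`, and only `φ_{ν,1}` has a linear
term. The coefficients of `g_ν` grow at most like `(n + 1) Γ(ν + n + 1)`, while
`φ_{ν,n}(1) ≤ e / (2^(ν+n) Γ(ν + n + 1))`, so these quadratic remainders are summable. Hence
`g_ν(t, ξ) = g_ν(t, 0) + c₁ ξ / (2^(ν+1) Γ(ν + 2)) + O(ξ²)`, where `c₁` is the coefficient of
`φ_{ν,1}` in `g_ν`, and `C_1^ν(α) = 2α Γ(ν + 1) / Γ(ν)` turns this slope into `α e^(−(2ν+1)t)`. -/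

lemma hasDerivWithinAt_of_abs_sub_le_sq {f : ℝ → ℝ} {a K x : ℝ} {s : Set ℝ}
    (h : ∀ᶠ y in 𝓝[s] x, |f y - f x - a * (y - x)| ≤ K * (y - x) ^ 2) :
    HasDerivWithinAt f a s x := by
  refine .of_isLittleO <| (Asymptotics.IsBigO.of_bound K ?_).trans_isLittleO
    ((Asymptotics.isLittleO_pow_sub_sub x one_lt_two).mono nhdsWithin_le_nhds)
  filter_upwards [h] with y hy
  simpa [mul_comm (y - x)] using hy

lemma hasDerivWithinAt_tsum_of_abs_sub_le_sq {f : ℕ → ℝ → ℝ} {c b M : ℕ → ℝ} {x : ℝ}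
    {s U : Set ℝ} (hM : Summable fun n => |c n| * M n) (hb : Summable fun n => c n * b n)
    (hfx : Summable fun n => c n * f n x) (hU : U ∈ 𝓝[s] x)
    (hf : ∀ n, ∀ y ∈ U, |f n y - f n x - b n * (y - x)| ≤ M n * (y - x) ^ 2) :
    HasDerivWithinAt (fun y => ∑' n, c n * f n y) (∑' n, c n * b n) s x := by
  refine hasDerivWithinAt_of_abs_sub_le_sq (K := ∑' n, |c n| * M n) ?_
  filter_upwards [hU] with y hy
  set r : ℕ → ℝ := fun n => c n * (f n y - f n x - b n * (y - x))
  have hr : ∀ n, ‖r n‖ ≤ |c n| * M n * (y - x) ^ 2 := fun n => by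
    rw [Real.norm_eq_abs, abs_mul, mul_assoc]
    exact mul_le_mul_of_nonneg_left (hf n y hy) (abs_nonneg _)
  have hrs : Summable r := .of_norm_bounded (hM.mul_right _) hr
  have hsplit : ∑' n, c n * f n y =
      ∑' n, c n * f n x + (∑' n, c n * b n) * (y - x) + ∑' n, r n := by
    rw [← tsum_mul_right, ← hfx.tsum_add (hb.mul_right _),
      ← (hfx.add (hb.mul_right _)).tsum_add hrs]
    congr 1
    funext n
    simp only [r]
    ring
  have hbound := tsum_of_norm_bounded (hM.mul_right ((y - x) ^ 2)).hasSum hr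
  rw [tsum_mul_right, Real.norm_eq_abs] at hbound
  rwa [hsplit, add_sub_right_comm, add_sub_cancel_left, add_sub_cancel_left]

lemma Gamma_le_Gamma_add_nat {x : ℝ} (hx : 1 ≤ x) (m : ℕ) : Gamma x ≤ Gamma (x + m) := by
  induction m with
  | zero => simp
  | succ k ih =>
    have hxk : 1 ≤ x + k := le_add_of_le_of_nonneg hx k.cast_nonneg
    calc Gamma x ≤ Gamma (x + k) := ih
      _ ≤ (x + k) * Gamma (x + k) :=
        le_mul_of_one_le_left (Gamma_pos_of_pos (by linarith)).le hxk
      _ = Gamma (x + (k + 1 : ℕ)) := by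
        rw [Nat.cast_succ, ← add_assoc, Gamma_add_one (by linarith)]

/-- `ξ ^ k` minus its first-order Taylor polynomial at `0`. -/
lemma pow_sub_zero_pow_sub_ite_mem_Icc {ξ : ℝ} (hξ : ξ ∈ Icc (0 : ℝ) 1) (k : ℕ) :
    ξ ^ k - 0 ^ k - (if k = 1 then ξ else 0) ∈ Icc 0 (ξ ^ 2) := by
  rcases k with _ | _ | k
  · simp [sq_nonneg]
  · simp [sq_nonneg]
  · simpa using ⟨pow_nonneg hξ.1 _, pow_le_pow_of_le_one hξ.1 hξ.2 (by omega)⟩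

noncomputable def phiBesselDenom (ν : ℝ) (n m : ℕ) : ℝ :=
  (2 : ℝ) ^ (ν + n + 2 * (m : ℝ)) * Gamma ((m : ℝ) + 1) * Gamma (ν + n + m + 1)

section phiBessel

variable {ν : ℝ}

lemma phiBesselDenom_pos (hν : 0 ≤ ν) (n m : ℕ) : 0 < phiBesselDenom ν n m :=
  mul_pos (mul_pos (rpow_pos_of_pos two_pos _) (Gamma_pos_of_pos (by positivity)))
    (Gamma_pos_of_pos (by positivity))

lemma le_phiBesselDenom (hν : 0 ≤ ν) (n m : ℕ) :
    2 ^ (ν + n) * Gamma (ν + n + 1) * m.factorial ≤ phiBesselDenom ν n m := by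
  have h2 : (2 : ℝ) ^ (ν + n) ≤ 2 ^ (ν + n + 2 * (m : ℝ)) :=
    rpow_le_rpow_of_exponent_le one_le_two (by linarith [m.cast_nonneg (α := ℝ)])
  have hΓ : Gamma (ν + n + 1) ≤ Gamma (ν + n + m + 1) := by
    simpa [add_right_comm _ (m : ℝ)] using
      Gamma_le_Gamma_add_nat (x := ν + n + 1) (by linarith [n.cast_nonneg (α := ℝ)]) m
  rw [phiBesselDenom, Gamma_nat_eq_factorial, mul_right_comm]
  gcongr

lemma phiBesselDenom_one_zero (hν : 0 ≤ ν) :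
    phiBesselDenom ν 1 0 = 2 ^ ν * 2 * ((ν + 1) * Gamma (ν + 1)) := by
  simp only [phiBesselDenom, Nat.cast_one, Nat.cast_zero, mul_zero, add_zero, zero_add,
    Gamma_one, mul_one, rpow_add two_pos, rpow_one]
  rw [← Gamma_add_one (by positivity)]

lemma summable_phiBessel (hν : 0 ≤ ν) (n : ℕ) (ξ : ℝ) :
    Summable fun m : ℕ => ξ ^ (n + 2 * m) / phiBesselDenom ν n m := by
  refine .of_norm_bounded ((Real.summable_pow_div_factorial (ξ ^ 2)).mul_left
    (|ξ| ^ n / (2 ^ (ν + n) * Gamma (ν + n + 1)))) fun m => ?_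
  rw [Real.norm_eq_abs, abs_div, abs_of_pos (phiBesselDenom_pos hν n m), pow_add, pow_mul,
    abs_mul, abs_pow, abs_of_nonneg (pow_nonneg (sq_nonneg ξ) m), div_mul_div_comm]
  gcongr
  exact le_phiBesselDenom hν n m

lemma hasSum_phiBessel (hν : 0 ≤ ν) (n : ℕ) (ξ : ℝ) :
    HasSum (fun m : ℕ => ξ ^ (n + 2 * m) / phiBesselDenom ν n m) (phiBessel ν n ξ) :=
  (summable_phiBessel hν n ξ).hasSum

lemma phiBessel_one_le (hν : 0 ≤ ν) (n : ℕ) :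
    phiBessel ν n 1 ≤ exp 1 / (2 ^ (ν + n) * Gamma (ν + n + 1)) := by
  have hexp : HasSum (fun m : ℕ => (1 : ℝ) ^ m / m.factorial) (exp 1) := by
    rw [Real.exp_eq_exp_ℝ]
    exact NormedSpace.expSeries_div_hasSum_exp 1
  refine hasSum_le (fun m => ?_) (hasSum_phiBessel hν n 1) (hexp.div_const _)
  rw [one_pow, one_pow, div_div, div_le_div_iff_of_pos_left one_pos (phiBesselDenom_pos hν n m)
    (by positivity), mul_comm]
  exact le_phiBesselDenom hν n m

lemma phiBessel_apply_zero (n : ℕ) :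
    phiBessel ν n 0 = if n = 0 then (phiBesselDenom ν 0 0)⁻¹ else 0 := by
  rw [phiBessel, tsum_eq_single 0 fun m hm => by simp [hm]]
  split_ifs with hn <;> simp [hn, phiBesselDenom]

lemma abs_phiBessel_sub_le (hν : 0 ≤ ν) (n : ℕ) {ξ : ℝ} (hξ : ξ ∈ Icc (0 : ℝ) 1) :
    |phiBessel ν n ξ - phiBessel ν n 0 - (if n = 1 then (phiBesselDenom ν 1 0)⁻¹ else 0) * ξ|
      ≤ phiBessel ν n 1 * ξ ^ 2 := by
  have hlin : HasSum (fun m : ℕ => (if n + 2 * m = 1 then ξ else 0) / phiBesselDenom ν n m)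
      ((if n = 1 then (phiBesselDenom ν 1 0)⁻¹ else 0) * ξ) := by
    convert hasSum_single
      (f := fun m : ℕ => (if n + 2 * m = 1 then ξ else 0) / phiBesselDenom ν n m) 0
      fun m hm => by simp [show n + 2 * m ≠ 1 by omega] using 1
    rcases eq_or_ne n 1 with rfl | hn <;> simp [*, div_eq_inv_mul]
  have hdiff := ((hasSum_phiBessel hν n ξ).sub (hasSum_phiBessel hν n 0)).sub hlin
  simp only [← sub_div] at hdiff
  have hterm := fun m => pow_sub_zero_pow_sub_ite_mem_Icc hξ (n + 2 * m)
  have hD := phiBesselDenom_pos hν n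
  rw [abs_of_nonneg (hdiff.nonneg fun m => div_nonneg (hterm m).1 (hD m).le)]
  refine hasSum_le (fun m => ?_) hdiff ((hasSum_phiBessel hν n 1).mul_right (ξ ^ 2))
  rw [one_pow, div_mul_eq_mul_div, one_mul]
  exact div_le_div_of_nonneg_right (hterm m).2 (hD m).le

lemma hasDerivWithinAt_phiBessel (hν : 0 ≤ ν) (n : ℕ) :
    HasDerivWithinAt (phiBessel ν n) (if n = 1 then (phiBesselDenom ν 1 0)⁻¹ else 0) (Ici 0) 0 :=
  hasDerivWithinAt_of_abs_sub_le_sq <| by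
    filter_upwards [Icc_mem_nhdsGE one_pos] with ξ hξ
    simpa using abs_phiBessel_sub_le hν n hξ

lemma hasDerivWithinAt_tsum_mul_phiBessel (hν : 0 ≤ ν) {c : ℕ → ℝ}
    (hc : Summable fun n => |c n| * phiBessel ν n 1) :
    HasDerivWithinAt (fun ξ => ∑' n, c n * phiBessel ν n ξ) (c 1 / phiBesselDenom ν 1 0)
      (Ici 0) 0 := by
  have hsupp : ∀ (s : ℕ) (b : ℕ → ℝ), (∀ n ≠ s, b n = 0) → Summable fun n => c n * b n :=
    fun s b hb => summable_of_ne_finset_zero (s := {s}) fun n hn => by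
      simp [hb n (Finset.notMem_singleton.mp hn)]
  convert hasDerivWithinAt_tsum_of_abs_sub_le_sq hc
    (hsupp 1 (fun n => if n = 1 then (phiBesselDenom ν 1 0)⁻¹ else 0) fun n hn => if_neg hn)
    (hsupp 0 (fun n => phiBessel ν n 0) fun n hn => by simp [phiBessel_apply_zero, hn])
    (Icc_mem_nhdsGE one_pos) fun n ξ hξ => by simpa using abs_phiBessel_sub_le hν n hξ
  rw [tsum_eq_single 1 fun n hn => by simp [hn], if_pos rfl, div_eq_mul_inv]

lemma summable_abs_mul_phiBessel_one (hν : 0 ≤ ν) {c : ℕ → ℝ} {K : ℝ}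
    (hc : ∀ n : ℕ, |c n| ≤ K * (n + 1) * Gamma (ν + n + 1)) :
    Summable fun n => |c n| * phiBessel ν n 1 := by
  have hK : 0 ≤ K := by
    have := (abs_nonneg _).trans (hc 0)
    simp only [Nat.cast_zero, zero_add, add_zero, mul_one] at this
    exact nonneg_of_mul_nonneg_left this (Gamma_pos_of_pos (by positivity))
  have hgeom : Summable fun n : ℕ => ((n : ℝ) + 1) * (1 / 2) ^ n := by
    have h := summable_pow_mul_geometric_of_norm_lt_one (R := ℝ) 1 (r := 1 / 2) (by norm_num)
    simpa [add_mul] using h.add summable_geometric_two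
  have hφ (n : ℕ) : 0 ≤ phiBessel ν n 1 :=
    (hasSum_phiBessel hν n 1).nonneg fun m => by simpa using (phiBesselDenom_pos hν n m).le
  refine .of_nonneg_of_le (fun n => mul_nonneg (abs_nonneg _) (hφ n)) (fun n => ?_)
    (hgeom.mul_left (K * exp 1))
  have h2 : (2 : ℝ) ^ n ≤ 2 ^ (ν + n) := by
    rw [← rpow_natCast]; exact rpow_le_rpow_of_exponent_le one_le_two (by linarith)
  calc |c n| * phiBessel ν n 1
      ≤ K * (n + 1) * Gamma (ν + n + 1) * (exp 1 / (2 ^ (ν + n) * Gamma (ν + n + 1))) :=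
        mul_le_mul (hc n) (phiBessel_one_le hν n) (hφ n) (by positivity)
    _ = K * exp 1 * ((n + 1) / 2 ^ (ν + n)) := by field_simp
    _ ≤ K * exp 1 * ((n + 1) * (1 / 2) ^ n) := by
        rw [one_div_pow, mul_one_div]; gcongr

end phiBessel

noncomputable def gegenbauerSum (ν : ℝ) (n : ℕ) (x : ℝ) : ℝ :=
  ∑ m ∈ Finset.range (n / 2 + 1),
    (-1 : ℝ) ^ m * Gamma (ν + n - m) * (2 * x) ^ (n - 2 * m) /
      ((m.factorial : ℝ) * ((n - 2 * m).factorial : ℝ))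

lemma gegenbauerC0_eq_gegenbauerSum {n : ℕ} (hn : n ≠ 0) (x : ℝ) :
    gegenbauerC0 n x = gegenbauerSum 0 n x := by
  rw [gegenbauerC0, if_neg hn, gegenbauerSum]
  refine Finset.sum_congr rfl fun m hm => ?_
  have h2m : 2 * m ≤ n := by have := Finset.mem_range.mp hm; omega
  rw [zero_add, Gamma_nat_eq_factorial, show (n : ℝ) - 2 * m + 1 = (n - 2 * m : ℕ) + 1 by
    push_cast [h2m]; ring, Gamma_nat_eq_factorial]

lemma gegenbauerSum_one (ν x : ℝ) : gegenbauerSum ν 1 x = 2 * x * Gamma (ν + 1) := by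
  rw [gegenbauerSum, show 1 / 2 + 1 = 1 from rfl, Finset.sum_range_one]
  simp [mul_comm]

lemma gegenbauerC_eq_div (ν : ℝ) (n : ℕ) (x : ℝ) :
    gegenbauerC ν n x = gegenbauerSum ν n x / Gamma ν := by
  rw [gegenbauerC, one_div_mul_eq_div, gegenbauerSum]

lemma abs_Gamma_add_sub_le {ν : ℝ} (hν : 0 ≤ ν) {n m : ℕ} (hm : m ≤ n / 2) :
    |Gamma (ν + n - m)| ≤ Gamma (ν + n) := by
  rcases Nat.eq_zero_or_pos n with rfl | hn
  · obtain rfl : m = 0 := by omega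
    simp [abs_of_nonneg (Gamma_nonneg_of_nonneg hν)]
  · have hmn : (m : ℝ) + 1 ≤ n := by exact_mod_cast (by omega : m + 1 ≤ n)
    rw [abs_of_pos (Gamma_pos_of_pos (by linarith))]
    simpa using Gamma_le_Gamma_add_nat (x := ν + n - m) (by linarith) m

lemma abs_gegenbauerSum_le {ν x : ℝ} (hν : 0 ≤ ν) (hx : |x| ≤ 1) (n : ℕ) :
    |gegenbauerSum ν n x| ≤ exp 2 * (n + 1) * Gamma (ν + n) := by
  have hterm : ∀ m ∈ Finset.range (n / 2 + 1),
      |(-1 : ℝ) ^ m * Gamma (ν + n - m) * (2 * x) ^ (n - 2 * m) /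
        ((m.factorial : ℝ) * ((n - 2 * m).factorial : ℝ))| ≤ exp 2 * Gamma (ν + n) := by
    intro m hm
    have h2x : |2 * x| ≤ 2 := by rw [abs_mul, abs_two]; linarith
    have hm1 : (1 : ℝ) ≤ m.factorial := by exact_mod_cast m.factorial_pos
    rw [abs_div, abs_mul, abs_mul, abs_pow, abs_neg, abs_one, one_pow, one_mul, abs_pow,
      abs_of_pos (by positivity : (0 : ℝ) < m.factorial * (n - 2 * m).factorial), mul_div_assoc,
      mul_comm (exp 2)]
    gcongr
    · exact abs_Gamma_add_sub_le hν (by have := Finset.mem_range.mp hm; omega)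
    · calc |2 * x| ^ (n - 2 * m) / (m.factorial * (n - 2 * m).factorial)
          ≤ 2 ^ (n - 2 * m) / (1 * (n - 2 * m).factorial) := by gcongr
        _ ≤ exp 2 := by rw [one_mul]; exact pow_div_factorial_le_exp 2 zero_le_two _
  have hcard : ((n / 2 + 1 : ℕ) : ℝ) ≤ n + 1 := by exact_mod_cast (by omega : n / 2 + 1 ≤ n + 1)
  calc |gegenbauerSum ν n x| ≤ ∑ m ∈ Finset.range (n / 2 + 1),
        |(-1 : ℝ) ^ m * Gamma (ν + n - m) * (2 * x) ^ (n - 2 * m) /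
          ((m.factorial : ℝ) * ((n - 2 * m).factorial : ℝ))| := Finset.abs_sum_le_sum_abs _ _
    _ ≤ (n / 2 + 1 : ℕ) * (exp 2 * Gamma (ν + n)) := by
        simpa using Finset.sum_le_card_nsmul _ _ _ hterm
    _ ≤ exp 2 * (n + 1) * Gamma (ν + n) := by
        rw [mul_left_comm, mul_assoc]
        gcongr

lemma abs_gegenbauerC_le {ν x : ℝ} (hν : 0 < ν) (hx : |x| ≤ 1) (n : ℕ) :
    |gegenbauerC ν n x| ≤ exp 2 / Gamma ν * (n + 1) * Gamma (ν + n) := by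
  have hΓ : 0 < Gamma ν := Gamma_pos_of_pos hν
  rw [gegenbauerC_eq_div, abs_div, abs_of_pos hΓ, div_le_iff₀ hΓ]
  calc |gegenbauerSum ν n x| ≤ exp 2 * (n + 1) * Gamma (ν + n) := abs_gegenbauerSum_le hν.le hx n
    _ = _ := by field_simp

lemma abs_gegenbauerC0_le {x : ℝ} (hx : |x| ≤ 1) {n : ℕ} (hn : n ≠ 0) :
    |gegenbauerC0 n x| ≤ exp 2 * (n + 1) * Gamma n := by
  simpa [gegenbauerC0_eq_gegenbauerSum hn] using abs_gegenbauerSum_le le_rfl hx n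

lemma abs_mul_mul_exp_neg_le {a C B q t : ℝ} (ha : 0 < a) (hC : |C| ≤ B * Gamma a)
    (hq : 0 ≤ q) (ht : 0 ≤ t) : |a * C * exp (-q * t)| ≤ B * Gamma (a + 1) := by
  have hexp : exp (-q * t) ≤ 1 := exp_le_one_iff.mpr (by nlinarith)
  rw [abs_mul, abs_mul, abs_of_pos ha, abs_of_pos (exp_pos _), Gamma_add_one ha.ne']
  have hBΓ : 0 ≤ B * Gamma a := (abs_nonneg C).trans hC
  calc a * |C| * exp (-q * t) ≤ a * (B * Gamma a) * 1 :=
        mul_le_mul (mul_le_mul_of_nonneg_left hC ha.le) hexp (exp_pos _).le (mul_nonneg ha.le hBΓ)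
    _ = B * (a * Gamma a) := by ring

lemma hasDerivWithinAt_gFun_of_pos {ν α t : ℝ} (hν : 0 < ν) (hα : |α| ≤ 1) (ht : 0 ≤ t) :
    HasDerivWithinAt (fun ξ => gFun ν α t ξ) (α * exp (-(2 * ν + 1) * t)) (Ici 0) 0 := by
  set c : ℕ → ℝ := fun n =>
    (ν + n) * gegenbauerC ν n α * exp (-((n : ℝ) * ((n : ℝ) + 2 * ν)) * t)
  have hc (n : ℕ) : |c n| ≤ exp 2 / Gamma ν * (n + 1) * Gamma (ν + n + 1) :=
    abs_mul_mul_exp_neg_le (by positivity) (abs_gegenbauerC_le hν hα n) (by positivity) ht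
  have hg : (fun ξ => gFun ν α t ξ) =
      fun ξ => 2 ^ ν * Gamma ν * ∑' n, c n * phiBessel ν n ξ := by
    funext ξ
    simp only [gFun, if_neg hν.ne', c]
  rw [hg]
  refine ((hasDerivWithinAt_tsum_mul_phiBessel hν.le
    (summable_abs_mul_phiBessel_one hν.le hc)).const_mul (2 ^ ν * Gamma ν)).congr_deriv ?_
  simp only [c, Nat.cast_one, gegenbauerC_eq_div, gegenbauerSum_one, phiBesselDenom_one_zero hν.le,
    show -(1 * (1 + 2 * ν)) * t = -(2 * ν + 1) * t by ring]
  field_simp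

lemma hasDerivWithinAt_gFun_zero {α t : ℝ} (hα : |α| ≤ 1) (ht : 0 ≤ t) :
    HasDerivWithinAt (fun ξ => gFun 0 α t ξ) (α * exp (-t)) (Ici 0) 0 := by
  set c : ℕ → ℝ := fun n => n * gegenbauerC0 n α * exp (-(n : ℝ) ^ 2 * t)
  have hc : ∀ n : ℕ, |c n| ≤ exp 2 * (n + 1) * Gamma (0 + n + 1) := by
    rintro (_ | n)
    · simp only [c, Nat.cast_zero, zero_mul, abs_zero]
      positivity
    · rw [zero_add]
      exact abs_mul_mul_exp_neg_le (by positivity) (abs_gegenbauerC0_le hα n.succ_ne_zero)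
        (by positivity) ht
  have hg : (fun ξ => gFun 0 α t ξ) =
      fun ξ => phiBessel 0 0 ξ + ∑' n, c n * phiBessel 0 n ξ := by
    funext ξ
    rw [gFun, if_pos rfl, ← Nat.succ_injective.tsum_eq (f := fun n => c n * phiBessel 0 n ξ)]
    rintro (_ | n) hn
    · simp [c] at hn
    · exact ⟨n, rfl⟩
  rw [hg]
  refine ((hasDerivWithinAt_phiBessel le_rfl 0).add (hasDerivWithinAt_tsum_mul_phiBessel le_rfl
    (summable_abs_mul_phiBessel_one le_rfl hc))).congr_deriv ?_
  simp only [c, Nat.cast_one, gegenbauerC0_eq_gegenbauerSum one_ne_zero, gegenbauerSum_one,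
    phiBesselDenom_one_zero le_rfl]
  norm_num
  ring

/-- Let `ν ≥ 0` and let `α` be a real number with `|α| ≤ 1`.  For every `t ≥ 0`, the
function `ξ ↦ g_ν(t,ξ)` has (one-sided) derivative at `ξ = 0` equal to `α e^(−(2ν+1)t)`. -/
theorem gFun_deriv_at_zero (ν : ℝ) (hν : 0 ≤ ν) (α : ℝ) (hα : |α| ≤ 1)
    (t : ℝ) (ht : 0 ≤ t) :
    HasDerivWithinAt (fun ξ => gFun ν α t ξ) (α * Real.exp (-(2 * ν + 1) * t))
      (Set.Ici 0) 0 := by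
  rcases hν.eq_or_lt with rfl | hν
  · simpa using hasDerivWithinAt_gFun_zero hα ht
  · exact hasDerivWithinAt_gFun_of_pos hν hα ht
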